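/- arXiv:2304.08148 — 2 statements merged into one kernel-verified Lean document; each statement's English description precedes it below -/
import Mathlib

section
/- Let P be a point in the open unit disk D. Then for every v ∈ S¹ the circle map ψ_P is differentiable at v (with respect to a lift to ℝ), and its derivative is ψ_P'(v) = |P ψ_P(v)| / |v P|, where |XY| denotes the Euclidean distance between X and Y. -/
open Real Set

noncomputable section

/-- The open unit disk `D` in `ℂ ≅ ℝ²`. -/
def unitDisk : Set ℂ := {z : ℂ | ‖z‖ < 1}

/-- The unit circle `S¹ = ∂D`. -/
def unitCircle : Set ℂ := {z : ℂ | ‖z‖ = 1}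

/-- The (two-sided infinite) line through `a` and `b`. -/
def lineThrough (a b : ℂ) : Set ℂ := {p : ℂ | ∃ t : ℝ, p = a + t • (b - a)}

/-- The line through `a` and `b` is tangent to the convex set `U`: it meets `U`
and `U` lies in one closed half-plane bounded by this line. -/
def IsTangent (U : Set ℂ) (a b : ℂ) : Prop :=
  (lineThrough a b ∩ U).Nonempty ∧
    ∃ φ : ℂ →L[ℝ] ℝ, φ ≠ 0 ∧ (∀ p ∈ lineThrough a b, φ p = φ a) ∧ ∀ u ∈ U, φ u ≤ φ a

/-- The counterclockwise tangent map `ψ_U`: for `v` on the unit circle, `psi U v` is the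
point of the circle closest to `v` in the counterclockwise direction among points `w` such
that the chord `vw` is tangent to `U` (obtained by rotating `v` by the infimum of the
admissible counterclockwise angles). -/
def psi (U : Set ℂ) (v : ℂ) : ℂ :=
  v * Complex.exp ((sInf {s : ℝ | 0 < s ∧ s ≤ 2 * π ∧
    IsTangent U v (v * Complex.exp (s * Complex.I))}) * Complex.I)

/-- The projection `π : ℝ → S¹ = ℝ/ℤ`, realized as `x ↦ e^{2πix}`. -/
def projS1 (x : ℝ) : ℂ := Complex.exp (2 * π * x * Complex.I)

/-- `F` is the lift of the circle map `f` (through `projS1`) normalized by `F 0 ∈ [0,1)`. -/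
def IsNormalizedLift (f : ℂ → ℂ) (F : CircleDeg1Lift) : Prop :=
  (∀ x : ℝ, f (projS1 x) = projS1 (F x)) ∧ F 0 ∈ Ico (0 : ℝ) 1

/-- The rotation number `ρ(f)` of a circle map `f`, via the translation number of its
normalized monotone degree-one lift. -/
def rotationNumber (f : ℂ → ℂ) : ℝ :=
  sInf {r : ℝ | ∃ F : CircleDeg1Lift, IsNormalizedLift f F ∧ r = F.translationNumber}

/-!
For `P ∈ D` and `v ∈ S¹`, the line through `v` and `P` meets `S¹` again at the Möbius image
`(v - P) / (conj P · v - 1) = -v · conj w / w = v · exp (i (π - 2 arg w))`, where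
`w = 1 - conj P · v` has positive real part. So `x ↦ x + 1/2 - arg w(x) / π` is a smooth lift of
`ψ_P`, whose derivative `(1 - |P|²) / |w|²` is positive and equals `|P ψ_P(v)| / |v P|`. Any
monotone degree-one lift of `ψ_P` differs from this strictly increasing one by an integer constant.
-/

open ComplexConjugate

lemma mul_conj_eq_one {v : ℂ} (hv : ‖v‖ = 1) : v * conj v = 1 := by
  simp [Complex.mul_conj', hv]

lemma norm_conj_mul {P v : ℂ} (hv : ‖v‖ = 1) : ‖conj P * v‖ = ‖P‖ := by
  simp [hv]

lemma re_one_sub_conj_mul_pos {P v : ℂ} (hP : ‖P‖ < 1) (hv : ‖v‖ = 1) :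
    0 < (1 - conj P * v).re := by
  have := Complex.re_le_norm (conj P * v)
  rw [norm_conj_mul hv] at this
  rw [Complex.sub_re, Complex.one_re]
  linarith

lemma one_sub_conj_mul_mem_slitPlane {P v : ℂ} (hP : ‖P‖ < 1) (hv : ‖v‖ = 1) :
    1 - conj P * v ∈ Complex.slitPlane :=
  Or.inl (re_one_sub_conj_mul_pos hP hv)

lemma one_sub_conj_mul_ne_zero {P v : ℂ} (hP : ‖P‖ < 1) (hv : ‖v‖ = 1) :
    1 - conj P * v ≠ 0 :=
  Complex.slitPlane_ne_zero (one_sub_conj_mul_mem_slitPlane hP hv)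

lemma norm_sub_eq_norm_one_sub_conj_mul {P v : ℂ} (hv : ‖v‖ = 1) :
    ‖v - P‖ = ‖1 - conj P * v‖ := by
  calc ‖v - P‖ = ‖conj v * (v - P)‖ := by simp [hv]
    _ = ‖conj (1 - conj P * v)‖ := by
      congr 1
      simp only [map_sub, map_one, map_mul, Complex.conj_conj]
      linear_combination mul_conj_eq_one hv
    _ = ‖1 - conj P * v‖ := Complex.norm_conj _

def secondIntersection (P v : ℂ) : ℂ := (v - P) / (conj P * v - 1)

lemma secondIntersection_eq {P v : ℂ} (hP : ‖P‖ < 1) (hv : ‖v‖ = 1) :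
    secondIntersection P v = -v * conj (1 - conj P * v) / (1 - conj P * v) := by
  have hw := one_sub_conj_mul_ne_zero hP hv
  rw [secondIntersection, div_eq_div_iff (by rwa [← neg_sub, neg_ne_zero]) hw]
  simp only [map_sub, map_one, map_mul, Complex.conj_conj]
  linear_combination (1 - conj P * v) * P * mul_conj_eq_one hv

lemma norm_secondIntersection {P v : ℂ} (hP : ‖P‖ < 1) (hv : ‖v‖ = 1) :
    ‖secondIntersection P v‖ = 1 := by
  rw [secondIntersection_eq hP hv, norm_div, norm_mul, norm_neg, Complex.norm_conj, hv, one_mul,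
    div_self (norm_ne_zero_iff.mpr (one_sub_conj_mul_ne_zero hP hv))]

lemma isTangent_singleton_iff {P a b : ℂ} : IsTangent {P} a b ↔ P ∈ lineThrough a b := by
  refine ⟨fun ⟨⟨q, hq, hqP⟩, _⟩ => hqP ▸ hq, fun hP => ⟨⟨P, hP, rfl⟩, ?_⟩⟩
  obtain ⟨c, hc, hcab⟩ : ∃ c : ℂ, c ≠ 0 ∧ (conj c * (b - a)).im = 0 := by
    by_cases hab : b - a = 0
    · exact ⟨1, one_ne_zero, by simp [hab]⟩
    · exact ⟨b - a, hab, by rw [Complex.conj_mul', ← Complex.ofReal_pow, Complex.ofReal_im]⟩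
  have hline : ∀ p ∈ lineThrough a b, (conj c * p).im = (conj c * a).im := by
    rintro p ⟨t, rfl⟩
    rw [Complex.real_smul, mul_add, Complex.add_im, mul_left_comm, Complex.im_ofReal_mul, hcab,
      mul_zero, add_zero]
  refine ⟨Complex.imCLM.comp (conj c • ContinuousLinearMap.id ℝ ℂ), ?_, hline, ?_⟩
  · intro h
    have := congrArg (fun φ : ℂ →L[ℝ] ℝ => φ (Complex.I * c)) h
    have hnorm : (conj c * (Complex.I * c)).im = ‖c‖ ^ 2 := by
      rw [mul_left_comm, Complex.conj_mul', ← Complex.ofReal_pow, Complex.I_mul_im,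
        Complex.ofReal_re]
    simp [hnorm, hc] at this
  · rintro _ rfl
    exact (hline _ hP).le

lemma mem_lineThrough_iff_eq_secondIntersection {P v w : ℂ} (hP : ‖P‖ < 1) (hv : ‖v‖ = 1)
    (hw : ‖w‖ = 1) : P ∈ lineThrough v w ↔ w = secondIntersection P v := by
  have hu := one_sub_conj_mul_ne_zero hP hv
  have hd : conj P * v - 1 ≠ 0 := by rwa [← neg_sub, neg_ne_zero]
  constructor
  · rintro ⟨t, ht⟩
    rw [secondIntersection, eq_div_iff hd, ht, Complex.real_smul]
    simp only [map_add, map_mul, map_sub, Complex.conj_ofReal]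
    linear_combination (1 - (t : ℂ)) * w * mul_conj_eq_one hv + (t : ℂ) * v * mul_conj_eq_one hw
  · rintro rfl
    have hre := re_one_sub_conj_mul_pos hP hv
    have hvu : v * conj (1 - conj P * v) = v - P := by
      simp only [map_sub, map_one, map_mul, Complex.conj_conj]
      linear_combination (-P) * mul_conj_eq_one hv
    rw [secondIntersection, show conj P * v - 1 = -(1 - conj P * v) by ring]
    generalize 1 - conj P * v = u at hu hre hvu ⊢
    have hsum : u + conj u ≠ 0 := by
      rw [Complex.add_conj]; exact_mod_cast (by positivity : 2 * u.re ≠ 0)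
    refine ⟨‖u‖ ^ 2 / (2 * u.re), ?_⟩
    have ht : ((‖u‖ ^ 2 / (2 * u.re) : ℝ) : ℂ) = u * conj u / (u + conj u) := by
      rw [Complex.mul_conj', Complex.add_conj]; push_cast; ring
    rw [Complex.real_smul, ht]
    field_simp
    linear_combination u * hvu

lemma exp_ofReal_mul_I_eq_iff {s t : ℝ} :
    Complex.exp (s * Complex.I) = Complex.exp (t * Complex.I) ↔ ∃ m : ℤ, s = t + m * (2 * π) := by
  rw [← Circle.exp_eq_exp, ← Circle.coe_inj, Circle.coe_exp, Circle.coe_exp]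

lemma exp_sInf_angle_eq {μ : ℂ} (hμ : ‖μ‖ = 1) :
    Complex.exp (sInf {s : ℝ | 0 < s ∧ s ≤ 2 * π ∧ Complex.exp (s * Complex.I) = μ} * Complex.I)
      = μ := by
  have hμ_arg : Complex.exp (μ.arg * Complex.I) = μ := by
    simpa [hμ] using Complex.norm_mul_exp_arg_mul_I μ
  have hset : {s : ℝ | 0 < s ∧ s ≤ 2 * π ∧ Complex.exp (s * Complex.I) = μ}
      = {toIocMod two_pi_pos 0 μ.arg} := by
    have hexp : ∀ s : ℝ, Complex.exp (s * Complex.I) = μ ↔ ∃ m : ℤ, μ.arg = s + m * (2 * π) :=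
      fun s => by rw [← exp_ofReal_mul_I_eq_iff, hμ_arg, eq_comm]
    ext s
    simp [hexp, eq_comm (a := s), toIocMod_eq_iff, zsmul_eq_mul, and_assoc]
  have hmem : toIocMod two_pi_pos 0 μ.arg ∈
      {s : ℝ | 0 < s ∧ s ≤ 2 * π ∧ Complex.exp (s * Complex.I) = μ} := hset ▸ rfl
  rw [hset, csInf_singleton]
  exact hmem.2.2

lemma psi_singleton_eq_secondIntersection {P v : ℂ} (hP : ‖P‖ < 1) (hv : ‖v‖ = 1) :
    psi {P} v = secondIntersection P v := by
  have hv0 : v ≠ 0 := norm_ne_zero_iff.mp (by rw [hv]; exact one_ne_zero)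
  have htangent : ∀ s : ℝ, IsTangent {P} v (v * Complex.exp (s * Complex.I))
      ↔ Complex.exp (s * Complex.I) = secondIntersection P v / v := by
    intro s
    rw [isTangent_singleton_iff, mem_lineThrough_iff_eq_secondIntersection hP hv (by simp [hv]),
      eq_div_iff hv0, mul_comm]
  simp only [psi, htangent]
  rw [exp_sInf_angle_eq (by rw [norm_div, norm_secondIntersection hP hv, hv, div_one]),
    mul_div_cancel₀ _ hv0]

lemma projS1_eq_exp (x : ℝ) : projS1 x = Complex.exp ((2 * π * x : ℝ) * Complex.I) := by
  rw [projS1]; push_cast; rfl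

lemma norm_projS1 (x : ℝ) : ‖projS1 x‖ = 1 := by
  rw [projS1_eq_exp, Complex.norm_exp_ofReal_mul_I]

lemma projS1_eq_projS1_iff {a b : ℝ} : projS1 a = projS1 b ↔ ∃ m : ℤ, a = b + m := by
  rw [projS1_eq_exp, projS1_eq_exp, exp_ofReal_mul_I_eq_iff]
  refine exists_congr fun m => ?_
  constructor <;> intro h
  · nlinarith [Real.pi_pos]
  · rw [h]; ring

lemma hasDerivAt_projS1 (x : ℝ) : HasDerivAt projS1 (2 * π * Complex.I * projS1 x) x := by
  have h := (((hasDerivAt_id x).ofReal_comp.const_mul (2 * π : ℂ)).mul_const Complex.I).cexp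
  simp only [id, Complex.ofReal_one, mul_one] at h
  exact h.congr_deriv (by rw [projS1]; ring)

def secondIntersectionLift (P : ℂ) (x : ℝ) : ℝ :=
  x + 1 / 2 - (Complex.log (1 - conj P * projS1 x)).im / π

lemma projS1_secondIntersectionLift {P : ℂ} (hP : ‖P‖ < 1) (x : ℝ) :
    projS1 (secondIntersectionLift P x) = secondIntersection P (projS1 x) := by
  have hv := norm_projS1 x
  set L := Complex.log (1 - conj P * projS1 x)
  have hexpL : Complex.exp L = 1 - conj P * projS1 x :=
    Complex.exp_log (one_sub_conj_mul_ne_zero hP hv)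
  have harg : 2 * π * (secondIntersectionLift P x : ℂ) * Complex.I
      = 2 * π * x * Complex.I + π * Complex.I + (conj L - L) := by
    rw [← neg_sub, Complex.sub_conj, secondIntersectionLift]
    push_cast
    field_simp
    ring
  rw [projS1, harg, Complex.exp_add, Complex.exp_add, Complex.exp_pi_mul_I, Complex.exp_sub,
    Complex.exp_conj, hexpL, secondIntersection_eq hP hv, projS1]
  ring

lemma two_mul_re_inv_one_sub_sub_one {a : ℂ} (ha : 1 - a ≠ 0) :
    2 * ((1 - a)⁻¹).re - 1 = (1 - ‖a‖ ^ 2) / ‖1 - a‖ ^ 2 := by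
  have hnorm : ‖1 - a‖ ^ 2 = 1 - 2 * a.re + ‖a‖ ^ 2 := by
    rw [← Complex.normSq_eq_norm_sq, ← Complex.normSq_eq_norm_sq, Complex.normSq_apply,
      Complex.normSq_apply]
    simp only [Complex.sub_re, Complex.one_re, Complex.sub_im, Complex.one_im]
    ring
  have hpos : 0 < ‖1 - a‖ ^ 2 := by positivity
  rw [Complex.inv_re, Complex.normSq_eq_norm_sq, Complex.sub_re, Complex.one_re]
  field_simp
  linarith

lemma hasDerivAt_secondIntersectionLift {P : ℂ} (hP : ‖P‖ < 1) (x : ℝ) :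
    HasDerivAt (secondIntersectionLift P) ((1 - ‖P‖ ^ 2) / ‖1 - conj P * projS1 x‖ ^ 2) x := by
  have hv := norm_projS1 x
  have hw := one_sub_conj_mul_ne_zero hP hv
  have hlog := (((hasDerivAt_projS1 x).const_mul (conj P)).const_sub 1).clog_real
    (one_sub_conj_mul_mem_slitPlane hP hv)
  have hlift := ((hasDerivAt_id x).add_const (1 / 2 : ℝ)).sub
    ((Complex.imCLM.hasFDerivAt.comp_hasDerivAt x hlog).div_const π)
  refine hlift.congr_deriv ?_
  have hquot : -(conj P * (2 * π * Complex.I * projS1 x)) / (1 - conj P * projS1 x)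
      = 2 * π * Complex.I * (1 - (1 - conj P * projS1 x)⁻¹) := by
    field_simp
    ring
  rw [← norm_conj_mul (P := P) hv, ← two_mul_re_inv_one_sub_sub_one hw]
  simp only [Complex.imCLM_apply, hquot]
  have him : ∀ z : ℂ, (2 * π * Complex.I * z).im = 2 * π * z.re := fun z => by simp
  rw [him, Complex.sub_re, Complex.one_re]
  field_simp
  ring

lemma strictMono_secondIntersectionLift {P : ℂ} (hP : ‖P‖ < 1) :
    StrictMono (secondIntersectionLift P) := by
  refine strictMono_of_hasDerivAt_pos (hasDerivAt_secondIntersectionLift hP) fun x => ?_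
  have hw := one_sub_conj_mul_ne_zero hP (norm_projS1 x)
  have hP2 : ‖P‖ ^ 2 < 1 := by nlinarith [norm_nonneg P]
  exact div_pos (by linarith) (by positivity)

lemma secondIntersectionLift_add_one (P : ℂ) (x : ℝ) :
    secondIntersectionLift P (x + 1) = secondIntersectionLift P x + 1 := by
  have hper : projS1 (x + 1) = projS1 x := projS1_eq_projS1_iff.mpr ⟨1, by simp⟩
  rw [secondIntersectionLift, secondIntersectionLift, hper]
  ring

/-- For `0 < y < 1` we have `F y - F 0 ∈ [0, 1]` and `G y - G 0 ∈ (0, 1)`, so the integer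
`F - G` takes the same value at `y` and at `0`; periodicity does the rest. -/
lemma CircleDeg1Lift.exists_eq_add_intCast (F : CircleDeg1Lift) {G : ℝ → ℝ} (hG : StrictMono G)
    (hG_add_one : ∀ x, G (x + 1) = G x + 1) (h : ∀ x, ∃ n : ℤ, F x = G x + n) :
    ∃ n : ℤ, ∀ x, F x = G x + n := by
  choose k hk using h
  have hk_periodic : Function.Periodic k 1 := fun x => by
    have h1 := hk (x + 1)
    rw [F.map_add_one, hk x, hG_add_one] at h1
    exact_mod_cast (by linarith : (k (x + 1) : ℝ) = k x)
  have hk_fract : ∀ x, k (Int.fract x) = k x := fun x => by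
    have h1 := hk_periodic.sub_int_mul_eq (x := x) ⌊x⌋
    rwa [mul_one, Int.self_sub_floor] at h1
  refine ⟨k 0, fun x => ?_⟩
  rw [hk x, ← hk_fract x]
  suffices k (Int.fract x) = k 0 by rw [this]
  obtain hzero | hpos := (Int.fract_nonneg x).eq_or_lt
  · rw [← hzero]
  have hlt := Int.fract_lt_one x
  have hF := And.intro (F.monotone hpos.le) (F.monotone hlt.le)
  have hG' := And.intro (hG hpos) (hG hlt)
  have hF1 : F 1 = F 0 + 1 := by simpa using F.map_add_one 0
  have hG1 : G 1 = G 0 + 1 := by simpa using hG_add_one 0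
  rw [hk, hk, hF1, hk] at hF
  rw [hG1] at hG'
  have hlo : k (Int.fract x) < k 0 + 1 := by
    exact_mod_cast (by linarith : (k (Int.fract x) : ℝ) < k 0 + 1)
  have hhi : k 0 < k (Int.fract x) + 1 := by
    exact_mod_cast (by linarith : (k 0 : ℝ) < k (Int.fract x) + 1)
  omega

lemma dist_secondIntersection_div_dist {P v : ℂ} (hP : ‖P‖ < 1) (hv : ‖v‖ = 1) :
    dist P (secondIntersection P v) / dist v P = (1 - ‖P‖ ^ 2) / ‖1 - conj P * v‖ ^ 2 := by
  have hw := one_sub_conj_mul_ne_zero hP hv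
  have hP2 : ‖P‖ ^ 2 ≤ 1 := by nlinarith [norm_nonneg P]
  have hsub : P - secondIntersection P v = v * (1 - ‖P‖ ^ 2 : ℝ) / (1 - conj P * v) := by
    rw [secondIntersection, show conj P * v - 1 = -(1 - conj P * v) by ring]
    push_cast
    rw [← Complex.conj_mul', eq_div_iff hw, div_neg, sub_neg_eq_add, add_mul, div_mul_cancel₀ _ hw]
    ring
  rw [dist_eq_norm, dist_eq_norm, hsub, norm_sub_eq_norm_one_sub_conj_mul hv, norm_div, norm_mul,
    hv, one_mul, Complex.norm_real, Real.norm_of_nonneg (by linarith), div_div, ← sq]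

/-- For a point `P` of the open unit disk, the circle map `ψ_P` is
differentiable at every `v ∈ S¹` (through its lift to `ℝ`), with derivative
`|P ψ_P(v)| / |v P|`. -/
theorem psi_point_hasDerivAt (P : ℂ) (hP : P ∈ unitDisk)
    (F : CircleDeg1Lift) (hF : IsNormalizedLift (psi {P}) F) :
    ∀ v ∈ unitCircle, ∀ x : ℝ, projS1 x = v →
      HasDerivAt (F : ℝ → ℝ) (dist P (psi {P} v) / dist v P) x := by
  rintro _ - x rfl
  have hP' : ‖P‖ < 1 := hP
  obtain ⟨n, hn⟩ := F.exists_eq_add_intCast (strictMono_secondIntersectionLift hP')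
    (secondIntersectionLift_add_one P) fun y => projS1_eq_projS1_iff.mp <| by
      rw [← hF.1, psi_singleton_eq_secondIntersection hP' (norm_projS1 y),
        projS1_secondIntersectionLift hP']
  rw [funext hn, psi_singleton_eq_secondIntersection hP' (norm_projS1 x),
    dist_secondIntersection_div_dist hP' (norm_projS1 x)]
  exact (hasDerivAt_secondIntersectionLift hP' x).add_const _
end
end

section
/- Let v₁ = (0,1) and v₂ = (0,−1) on S¹, and let k > 0. Then the set of points P ∈ D whose hyperbolic distance (in the Beltrami–Klein model) from P to the line v₁v₂ equals k is exactly { (x,y) ∈ D : ((e^{2k}+1)/(e^{2k}−1))² x² + y² = 1 }. -/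
/-!
By the cross-ratio formula, `cosh d'(P, Q) = (1 - ⟪P, Q⟫) / √((1 - |P|²) (1 - |Q|²))`: the chord
`t ↦ P + t (Q - P)` meets the circle at the roots `t₁, t₂` of a quadratic, and the cross-ratio
`(1 - t₁) t₂ / (t₁ (1 - t₂))` is `exp (2 d')`. For `P = (x, y)` and `S = (0, s)` on the diameter,
`(1 - y s)² - (1 - y²) (1 - s²) = (y - s)²`, so the distance to the diameter is attained at
`S = (0, y)`, where `cosh δ = √((1 - y²) / (1 - x² - y²))`. Since
`(e^{2k} + 1) / (e^{2k} - 1) = coth k`, the condition `cosh δ = cosh k` is the equation of the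
ellipse.
-/

open Real Set

noncomputable section

/-- The hyperbolic distance `d'(P,Q)` in the Beltrami–Klein model:
`(1/2)|log(|v₁Q||v₂P|/(|v₁P||v₂Q|))|` where `v₁, v₂` are the intersections of the
line `PQ` with the unit circle. -/
def dK (P Q : ℂ) : ℝ :=
  sInf {d : ℝ | ∃ v₁ v₂ : ℂ, v₁ ∈ unitCircle ∧ v₂ ∈ unitCircle ∧ v₁ ≠ v₂ ∧
    v₁ ∈ lineThrough P Q ∧ v₂ ∈ lineThrough P Q ∧
    d = (1 / 2) * |Real.log ((dist v₁ Q * dist v₂ P) / (dist v₁ P * dist v₂ Q))|}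

/-- `δ(P,Q,R)`: the hyperbolic distance from `R` to the hyperbolic line `PQ`
(the minimum of `d'(R,S)` over points `S` of the line `PQ` inside the disk). -/
def deltaK (P Q R : ℂ) : ℝ := sInf (dK R '' (lineThrough P Q ∩ unitDisk))

/-- `Δ'ₙ(P,Q) = log((e^{n d'(P,Q)} + 1)/(e^{n d'(P,Q)} − 1))`. -/
def Delta' (n : ℕ) (P Q : ℂ) : ℝ :=
  Real.log ((Real.exp (n * dK P Q) + 1) / (Real.exp (n * dK P Q) - 1))

/-- The (closed) triangle with vertices `P`, `Q`, `R`. -/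
def triangleSet (P Q R : ℂ) : Set ℂ := convexHull ℝ {P, Q, R}

lemma mem_unitDisk_iff (z : ℂ) : z ∈ unitDisk ↔ z.re ^ 2 + z.im ^ 2 < 1 := by
  rw [unitDisk, mem_ofPred_eq, ← sq_lt_one_iff₀ (norm_nonneg z), ← Complex.normSq_eq_norm_sq,
    Complex.normSq_apply]
  ring_nf

lemma mem_unitCircle_iff (z : ℂ) : z ∈ unitCircle ↔ z.re ^ 2 + z.im ^ 2 = 1 := by
  rw [unitCircle, mem_ofPred_eq, ← pow_eq_one_iff_of_nonneg (norm_nonneg z) two_ne_zero,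
    ← Complex.normSq_eq_norm_sq, Complex.normSq_apply]
  ring_nf

lemma lineThrough_eq_range_lineMap (a b : ℂ) :
    lineThrough a b = range (AffineMap.lineMap a b : ℝ → ℂ) := by
  ext p
  simp only [lineThrough, mem_ofPred_eq, mem_range, AffineMap.lineMap_apply_module', add_comm a,
    eq_comm]

lemma lineThrough_I_neg_I : lineThrough Complex.I (-Complex.I) = {S : ℂ | S.re = 0} := by
  ext S
  simp only [lineThrough, mem_ofPred_eq]
  constructor
  · rintro ⟨t, rfl⟩
    simp
  · intro h
    refine ⟨(1 - S.im) / 2, Complex.ext (by simp [h]) ?_⟩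
    simp only [Complex.add_im, Complex.real_smul, Complex.im_ofReal_mul, Complex.sub_im,
      Complex.neg_im, Complex.I_im]
    ring

lemma dist_lineMap_cross_ratio {E : Type*} [NormedAddCommGroup E] [NormedSpace ℝ E] {P Q : E}
    (hPQ : P ≠ Q) (t₁ t₂ : ℝ) :
    dist (AffineMap.lineMap P Q t₁) Q * dist (AffineMap.lineMap P Q t₂) P /
        (dist (AffineMap.lineMap P Q t₁) P * dist (AffineMap.lineMap P Q t₂) Q) =
      |(1 - t₁) * t₂ / (t₁ * (1 - t₂))| := by
  have hd : dist P Q ≠ 0 := dist_ne_zero.2 hPQ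
  simp only [dist_lineMap_left, dist_lineMap_right, Real.norm_eq_abs, abs_div, abs_mul]
  rw [mul_mul_mul_comm, mul_mul_mul_comm |t₁|, mul_div_mul_right _ _ (mul_ne_zero hd hd)]

lemma arcosh_eq_iff {x y : ℝ} (hx : 1 ≤ x) (hy : 0 ≤ y) : arcosh x = y ↔ x = cosh y := by
  constructor
  · rintro rfl
    exact (cosh_arcosh hx).symm
  · rintro rfl
    exact arcosh_cosh hy

lemma cross_ratio_quadratic_roots {A b c s : ℝ} (hA : A ≠ 0) (hs : s ^ 2 = b ^ 2 + A * c) :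
    (1 - (-b - s) / A) * ((-b + s) / A) / ((-b - s) / A * (1 - (-b + s) / A)) =
      (c - b + s) / (c - b - s) := by
  have hnum : (1 - (-b - s) / A) * ((-b + s) / A) = (c - b + s) / A := by
    field_simp
    linear_combination hs
  have hden : (-b - s) / A * (1 - (-b + s) / A) = (c - b - s) / A := by
    field_simp
    linear_combination hs
  rw [hnum, hden, div_div_div_cancel_right₀ hA]

def coshDistKlein (P Q : ℂ) : ℝ :=
  (1 - (P.re * Q.re + P.im * Q.im)) /
    √((1 - (P.re ^ 2 + P.im ^ 2)) * (1 - (Q.re ^ 2 + Q.im ^ 2)))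

lemma one_le_coshDistKlein {P Q : ℂ} (hP : P ∈ unitDisk) (hQ : Q ∈ unitDisk) :
    1 ≤ coshDistKlein P Q := by
  rw [mem_unitDisk_iff] at hP hQ
  have hM : 0 < √((1 - (P.re ^ 2 + P.im ^ 2)) * (1 - (Q.re ^ 2 + Q.im ^ 2))) :=
    Real.sqrt_pos.2 (mul_pos (by linarith) (by linarith))
  rw [coshDistKlein, one_le_div hM, Real.sqrt_le_left]
  · nlinarith [sq_nonneg (P.re * (Q.re - P.re) + P.im * (Q.im - P.im)),
      sq_nonneg (Q.re - P.re), sq_nonneg (Q.im - P.im)]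
  · nlinarith [sq_nonneg (P.re - Q.re), sq_nonneg (P.im - Q.im)]

lemma exists_lineMap_mem_unitCircle_iff {P Q : ℂ} (hP : P ∈ unitDisk) (hQ : Q ∈ unitDisk)
    (hPQ : P ≠ Q) :
    ∃ t₁ t₂ : ℝ, t₁ ≠ t₂ ∧ (∀ t, AffineMap.lineMap P Q t ∈ unitCircle ↔ t = t₁ ∨ t = t₂) ∧
      (1 - t₁) * t₂ / (t₁ * (1 - t₂)) = exp (2 * arcosh (coshDistKlein P Q)) := by
  have hr := one_le_coshDistKlein hP hQ
  rw [mem_unitDisk_iff] at hP hQ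
  set a := arcosh (coshDistKlein P Q)
  set M := √((1 - (P.re ^ 2 + P.im ^ 2)) * (1 - (Q.re ^ 2 + Q.im ^ 2))) with hM_def
  set A := (Q.re - P.re) ^ 2 + (Q.im - P.im) ^ 2
  set b := P.re * (Q.re - P.re) + P.im * (Q.im - P.im) with hb_def
  -- with `N := 1 - ⟪P, Q⟫ = M * cosh a`, this choice makes `N ± s = M * exp (± a)`
  set s := M * sinh a
  have hM : 0 < M := Real.sqrt_pos.2 (mul_pos (by linarith) (by linarith))
  have hM2 : M ^ 2 = (1 - (P.re ^ 2 + P.im ^ 2)) * (1 - (Q.re ^ 2 + Q.im ^ 2)) :=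
    Real.sq_sqrt (mul_pos (by linarith) (by linarith)).le
  have hA : 0 < A := by
    have : Q.re - P.re ≠ 0 ∨ Q.im - P.im ≠ 0 := by
      by_contra! h
      exact hPQ (Complex.ext (by linarith [h.1]) (by linarith [h.2]))
    rcases this with h | h <;> positivity
  have hcosh : M * cosh a = 1 - (P.re * Q.re + P.im * Q.im) := by
    rw [cosh_arcosh hr, coshDistKlein, ← hM_def, mul_div_cancel₀ _ hM.ne']
  -- `s ^ 2` is the reduced discriminant of the quadratic equation for the circle intersections
  have hs2 : s ^ 2 = b ^ 2 + A * (1 - (P.re ^ 2 + P.im ^ 2)) := by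
    have : s ^ 2 = (M * cosh a) ^ 2 - M ^ 2 := by rw [mul_pow, mul_pow, cosh_sq]; ring
    rw [this, hcosh, hM2]
    ring
  refine ⟨(-b - s) / A, (-b + s) / A, ?_, fun t => ?_, ?_⟩
  · rw [Ne, div_left_inj' hA.ne']
    intro h
    have hs : s = 0 := by linarith
    nlinarith [sq_nonneg b, sq_nonneg (Q.re - P.re), sq_nonneg (Q.im - P.im)]
  · have hquad : (AffineMap.lineMap P Q t).re ^ 2 + (AffineMap.lineMap P Q t).im ^ 2 - 1 =
        A * (t - (-b - s) / A) * (t - (-b + s) / A) := by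
      simp only [AffineMap.lineMap_apply_module', Complex.add_re, Complex.add_im,
        Complex.real_smul, Complex.mul_re, Complex.mul_im, Complex.ofReal_re, Complex.ofReal_im,
        Complex.sub_re, Complex.sub_im]
      field_simp
      linear_combination hs2
    rw [mem_unitCircle_iff, ← sub_eq_zero, hquad, mul_assoc, mul_eq_zero_iff_left hA.ne',
      mul_eq_zero, sub_eq_zero, sub_eq_zero]
  · have hN : 1 - (P.re ^ 2 + P.im ^ 2) - b = M * cosh a := by rw [hcosh, hb_def]; ring
    rw [cross_ratio_quadratic_roots hA.ne' hs2, hN, ← mul_add, ← mul_sub,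
      mul_div_mul_left _ _ hM.ne', cosh_add_sinh, cosh_sub_sinh, ← exp_sub]
    ring_nf

lemma dK_self (P : ℂ) : dK P P = 0 := by
  rw [dK, ← Real.sInf_empty]
  congr 1
  refine eq_empty_iff_forall_notMem.2 ?_
  rintro d ⟨v₁, v₂, -, -, hne, ⟨t₁, rfl⟩, ⟨t₂, rfl⟩, -⟩
  simp at hne

lemma coshDistKlein_self {P : ℂ} (hP : P ∈ unitDisk) : coshDistKlein P P = 1 := by
  rw [mem_unitDisk_iff] at hP
  rw [coshDistKlein, Real.sqrt_mul_self (by linarith), div_eq_one_iff_eq (by linarith)]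
  ring

lemma dK_eq_arcosh {P Q : ℂ} (hP : P ∈ unitDisk) (hQ : Q ∈ unitDisk) :
    dK P Q = arcosh (coshDistKlein P Q) := by
  rcases eq_or_ne P Q with rfl | hPQ
  · rw [dK_self, coshDistKlein_self hP, arcosh_zero]
  obtain ⟨t₁, t₂, h12, hcircle, hcross⟩ := exists_lineMap_mem_unitCircle_iff hP hQ hPQ
  set a := arcosh (coshDistKlein P Q)
  have ha : 0 ≤ a := arcosh_nonneg (one_le_coshDistKlein hP hQ)
  have hvalue : ∀ t t' : ℝ, t = t₁ ∧ t' = t₂ ∨ t = t₂ ∧ t' = t₁ →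
      1 / 2 * |log (dist (AffineMap.lineMap P Q t) Q * dist (AffineMap.lineMap P Q t') P /
        (dist (AffineMap.lineMap P Q t) P * dist (AffineMap.lineMap P Q t') Q))| = a := by
    have hswap : (1 - t₂) * t₁ / (t₂ * (1 - t₁)) = ((1 - t₁) * t₂ / (t₁ * (1 - t₂)))⁻¹ := by
      rw [inv_div]
      ring
    rintro t t' (⟨rfl, rfl⟩ | ⟨rfl, rfl⟩) <;>
      rw [dist_lineMap_cross_ratio hPQ, log_abs]
    · rw [hcross, log_exp, abs_of_nonneg (by positivity)]
      ring
    · rw [hswap, log_inv, abs_neg, hcross, log_exp, abs_of_nonneg (by positivity)]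
      ring
  rw [dK, ← csInf_singleton a]
  congr 1
  ext d
  simp only [lineThrough_eq_range_lineMap, mem_ofPred_eq, mem_singleton_iff]
  constructor
  · rintro ⟨_, _, hv₁, hv₂, hne, ⟨t, rfl⟩, ⟨t', rfl⟩, rfl⟩
    apply hvalue
    rcases (hcircle t).1 hv₁ with rfl | rfl <;> rcases (hcircle t').1 hv₂ with rfl | rfl <;>
      simp_all
  · rintro rfl
    exact ⟨_, _, (hcircle t₁).2 (Or.inl rfl), (hcircle t₂).2 (Or.inr rfl),
      (AffineMap.lineMap_injective ℝ hPQ).ne h12, ⟨t₁, rfl⟩, ⟨t₂, rfl⟩,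
      (hvalue t₁ t₂ (Or.inl ⟨rfl, rfl⟩)).symm⟩

lemma coshDistKlein_im_mul_I {z : ℂ} (hz : z ∈ unitDisk) :
    coshDistKlein z (z.im * Complex.I) = √((1 - z.im ^ 2) / (1 - (z.re ^ 2 + z.im ^ 2))) := by
  rw [mem_unitDisk_iff] at hz
  have hu : 0 < 1 - z.im ^ 2 := by nlinarith
  have hw : 0 < 1 - (z.re ^ 2 + z.im ^ 2) := by linarith
  have hre : ((z.im : ℂ) * Complex.I).re = 0 := by simp
  have him : ((z.im : ℂ) * Complex.I).im = z.im := by simp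
  rw [coshDistKlein, hre, him, mul_zero, zero_add, zero_pow two_ne_zero, zero_add, ← sq,
    Real.sqrt_div' _ hw.le, Real.sqrt_mul hw.le,
    div_eq_div_iff (mul_ne_zero (Real.sqrt_pos.2 hw).ne' (Real.sqrt_pos.2 hu).ne') (by positivity)]
  linear_combination (-√(1 - (z.re ^ 2 + z.im ^ 2))) * Real.mul_self_sqrt hu.le

lemma sqrt_le_coshDistKlein_of_re_eq_zero {z S : ℂ} (hz : z ∈ unitDisk) (hS : S ∈ unitDisk)
    (hSre : S.re = 0) :
    √((1 - z.im ^ 2) / (1 - (z.re ^ 2 + z.im ^ 2))) ≤ coshDistKlein z S := by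
  rw [mem_unitDisk_iff, hSre] at hS
  rw [mem_unitDisk_iff] at hz
  have hu : 0 < 1 - z.im ^ 2 := by nlinarith
  have hv : 0 < 1 - S.im ^ 2 := by nlinarith
  have hw : 0 < 1 - (z.re ^ 2 + z.im ^ 2) := by linarith
  rw [coshDistKlein, hSre, mul_zero, zero_add, zero_pow two_ne_zero, zero_add,
    ← mul_div_mul_right _ _ hv.ne', Real.sqrt_div' _ (by positivity)]
  refine div_le_div_of_nonneg_right ((Real.sqrt_le_left ?_).2 ?_) (Real.sqrt_nonneg _)
  · nlinarith [sq_nonneg (z.im - S.im), sq_nonneg (z.im + S.im)]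
  · nlinarith [sq_nonneg (z.im - S.im)]

lemma deltaK_I_neg_I {z : ℂ} (hz : z ∈ unitDisk) :
    deltaK Complex.I (-Complex.I) z =
      arcosh √((1 - z.im ^ 2) / (1 - (z.re ^ 2 + z.im ^ 2))) := by
  have hproj : (z.im : ℂ) * Complex.I ∈ lineThrough Complex.I (-Complex.I) ∩ unitDisk := by
    have := (mem_unitDisk_iff z).1 hz
    refine ⟨by simp [lineThrough_I_neg_I], (mem_unitDisk_iff _).2 ?_⟩
    simp only [Complex.re_ofReal_mul, Complex.im_ofReal_mul, Complex.I_re, Complex.I_im]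
    nlinarith
  refine IsLeast.csInf_eq ⟨⟨_, hproj, ?_⟩, ?_⟩
  · rw [dK_eq_arcosh hz hproj.2, coshDistKlein_im_mul_I hz]
  · rintro _ ⟨S, ⟨hSline, hS⟩, rfl⟩
    rw [lineThrough_I_neg_I] at hSline
    have hle := sqrt_le_coshDistKlein_of_re_eq_zero hz hS hSline
    rw [← coshDistKlein_im_mul_I hz] at hle ⊢
    rw [dK_eq_arcosh hz hS]
    exact (arcosh_le_arcosh (by linarith [one_le_coshDistKlein hz hproj.2])
      (by linarith [one_le_coshDistKlein hz hS])).2 hle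

lemma exp_two_mul_add_one_div_sub_one (x : ℝ) :
    (exp (2 * x) + 1) / (exp (2 * x) - 1) = cosh x / sinh x := by
  have hexp : exp (2 * x) = exp x * exp x := by rw [two_mul, exp_add]
  rw [← mul_div_mul_left (cosh x) (sinh x) (mul_ne_zero two_ne_zero (exp_pos x).ne'), cosh_eq,
    sinh_eq, exp_neg, hexp]
  field_simp

/-- For `v₁ = (0,1)`, `v₂ = (0,−1)` and `k > 0`, the set of points of `D`
at hyperbolic distance `k` from the line `v₁v₂` is the ellipse
`((e^{2k}+1)/(e^{2k}−1))² x² + y² = 1` intersected with `D`. -/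
theorem equidistant_set_from_diameter_eq_ellipse (k : ℝ) (hk : 0 < k) :
    {P : ℂ | P ∈ unitDisk ∧ deltaK Complex.I (-Complex.I) P = k} =
      {z : ℂ | z ∈ unitDisk ∧
        ((Real.exp (2 * k) + 1) / (Real.exp (2 * k) - 1)) ^ 2 * z.re ^ 2 + z.im ^ 2 = 1} := by
  ext z
  refine and_congr_right fun hz => ?_
  have hw : 0 < 1 - (z.re ^ 2 + z.im ^ 2) := by linarith [(mem_unitDisk_iff z).1 hz]
  have hsinh : sinh k ≠ 0 := (sinh_pos_iff.2 hk).ne'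
  have hone : 1 ≤ (1 - z.im ^ 2) / (1 - (z.re ^ 2 + z.im ^ 2)) :=
    (one_le_div hw).2 (by nlinarith)
  rw [deltaK_I_neg_I hz, arcosh_eq_iff (Real.one_le_sqrt.2 hone) hk.le,
    Real.sqrt_eq_iff_eq_sq (by linarith) (cosh_pos k).le, div_eq_iff hw.ne',
    exp_two_mul_add_one_div_sub_one, div_pow]
  -- both sides say `cosh k ^ 2 * z.re ^ 2 = sinh k ^ 2 * (1 - z.im ^ 2)`
  constructor <;> intro h
  · field_simp
    linear_combination h + (1 - z.im ^ 2) * cosh_sq k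
  · field_simp at h
    linear_combination h - (1 - z.im ^ 2) * cosh_sq k
end
end
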